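/- (Deterministic success of the first CAST decoding iteration.) Let N and m be positive integers with m dividing N and 2m ≤ N, and let A ∈ ℂ^{m×N} be the partial IDFT matrix. Fix ω₀ ∈ {1,…,N/m} and let Γ = {ω₀ + cN/m : c = 0,1,…,m−1}. Let Ω ⊆ Γ with |Ω| = k, let x : Ω → ℂ, let ṽ ∈ ℂ^m, and set ỹ = Σ_{ω∈Ω} x_ω·a_ω + ṽ. Let ρ̄ = k/(m·sin(π/(2m))) and suppose ρ̄ < 1 and ‖ṽ‖₂ < ((1−ρ̄)/2)·max_{ω∈Ω}|x_ω|. Then every index ω* ∈ {1,…,N} maximizing ω ↦ |⟨a_ω, ỹ⟩| satisfies dist_N(ω*, ω) < N/(2m) for some ω ∈ Ω, where dist_N(p,q) = min(|p−q|, N−|p−q|) is the cyclic distance; that is, the index chosen in the first iteration is τ-close to a true support element with τ = N/(2m). -/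

import Mathlib

open Complex Real

/-- The ω-th column of the partial IDFT matrix `A ∈ ℂ^{m×N}` with entries
`A_{l,ω} = (1/√m)·exp(2πi(l−1)(ω−1)/N)` (here indexed from 0). -/
noncomputable def idftCol (N m : ℕ) (ω : Fin N) : EuclideanSpace ℂ (Fin m) :=
  WithLp.toLp 2 (fun l => ((1 / Real.sqrt m : ℝ) : ℂ) *
    Complex.exp (2 * Real.pi * Complex.I * ((l : ℕ) : ℂ) * ((ω : ℕ) : ℂ) / (N : ℂ)))

/-- The cyclic distance `dist_N(p,q) = min(|p−q|, N−|p−q|)` between two indices,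
as a real number. -/
noncomputable def cyclicDist (N : ℕ) (p q : Fin N) : ℝ :=
  min |((p : ℕ) : ℝ) - ((q : ℕ) : ℝ)| ((N : ℝ) - |((p : ℕ) : ℝ) - ((q : ℕ) : ℝ)|)

/-!
The columns indexed by `Γ` are orthonormal, so the correlation of `ỹ` with the column of the
largest coefficient is at least `max |x_ω| - ‖ṽ‖`. If a column were at cyclic distance at least
`N/(2m)` from every support index, its inner product with each support column would be a
Dirichlet kernel value of modulus at most `1/(m sin(π/(2m)))`, so its correlation with `ỹ` would
be at most `ρ̄ · max |x_ω| + ‖ṽ‖`. The noise bound makes this smaller than the first correlation,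
so such a column cannot be a maximizer.
-/

open Finset

lemma inner_idftCol (N m : ℕ) (ω ω' : Fin N) :
    inner ℂ (idftCol N m ω) (idftCol N m ω') =
      (m : ℂ)⁻¹ * ∑ l ∈ range m, (exp (2 * π * I / N) ^ ((ω' : ℤ) - ω)) ^ l := by
  rw [PiLp.inner_apply, mul_sum, ← Fin.sum_univ_eq_sum_range]
  refine sum_congr rfl fun l _ => ?_
  have hscale : ((1 / √m : ℝ) : ℂ) * ((1 / √m : ℝ) : ℂ) = (m : ℂ)⁻¹ := by
    rw [← ofReal_mul, one_div_mul_one_div, Real.mul_self_sqrt m.cast_nonneg]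
    simp
  have hphase : exp (2 * π * I * l * ω' / N) * exp (-(2 * π * I * l * ω / N)) =
      (exp (2 * π * I / N) ^ ((ω' : ℤ) - ω)) ^ (l : ℕ) := by
    rw [← Complex.exp_add, ← zpow_natCast, ← zpow_mul, ← exp_int_mul]
    congr 1
    push_cast
    ring
  simp only [idftCol, RCLike.inner_apply, map_mul, conj_ofReal, ← exp_conj, map_div₀,
    conj_I, map_ofNat, map_natCast]
  rw [← hphase, ← hscale]
  ring_nf

lemma norm_idftCol {m : ℕ} (hm : 0 < m) (N : ℕ) (ω : Fin N) : ‖idftCol N m ω‖ = 1 := by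
  have h : inner ℂ (idftCol N m ω) (idftCol N m ω) = 1 := by
    rw [inner_idftCol]
    simp [inv_mul_cancel₀ (show (m : ℂ) ≠ 0 by exact_mod_cast hm.ne')]
  rw [norm_eq_sqrt_re_inner (𝕜 := ℂ), h]
  simp

lemma inner_idftCol_eq_zero {N m : ℕ} (hdvd : m ∣ N) {ω ω' : Fin N} (hne : ω ≠ ω')
    (hstep : ((N / m : ℕ) : ℤ) ∣ (ω' : ℤ) - ω) :
    inner ℂ (idftCol N m ω) (idftCol N m ω') = 0 := by
  have hξ : IsPrimitiveRoot (exp (2 * π * I / N)) N := isPrimitiveRoot_exp N (Fin.pos ω).ne'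
  set z := exp (2 * π * I / N) ^ ((ω' : ℤ) - ω)
  have hz1 : z ≠ 1 := by
    rw [Ne, hξ.zpow_eq_one_iff_dvd]
    intro hN
    have hδ : (ω' : ℤ) - ω = 0 :=
      Int.eq_zero_of_abs_lt_dvd hN (abs_sub_lt_iff.2 ⟨by omega, by omega⟩)
    exact hne (Fin.ext (by omega))
  have hzm : z ^ m = 1 := by
    rw [← zpow_natCast, ← zpow_mul, hξ.zpow_eq_one_iff_dvd]
    obtain ⟨e, he⟩ := hstep
    refine ⟨e, ?_⟩
    rw [he, mul_right_comm, ← Nat.cast_mul, Nat.div_mul_cancel hdvd, mul_comm]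
  rw [inner_idftCol, geom_sum_eq hz1, hzm, sub_self, zero_div, mul_zero]

lemma norm_geom_sum_exp_I_mul_le (m : ℕ) {θ : ℝ} (hθ : Real.sin (θ / 2) ≠ 0) :
    ‖∑ l ∈ range m, exp (I * θ) ^ l‖ ≤ 1 / |Real.sin (θ / 2)| := by
  have hz : ‖exp (I * θ) - 1‖ = 2 * |Real.sin (θ / 2)| := by
    rw [norm_exp_I_mul_ofReal_sub_one, norm_mul, Real.norm_eq_abs, Real.norm_eq_abs, abs_two]
  have hpos : 0 < 2 * |Real.sin (θ / 2)| := by positivity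
  have hnum : ‖exp (I * θ) ^ m - 1‖ ≤ 2 := by
    refine (norm_sub_le _ _).trans ?_
    rw [norm_pow, mul_comm, norm_exp_ofReal_mul_I, one_pow, norm_one]
    norm_num
  rw [← mul_div_mul_left 1 _ two_ne_zero, mul_one, le_div_iff₀ hpos, ← hz, ← norm_mul,
    geom_sum_mul]
  exact hnum

lemma cyclicDist_le_half (N : ℕ) (p q : Fin N) : cyclicDist N p q ≤ N / 2 := by
  have h₁ := min_le_left |((p : ℕ) : ℝ) - q| (N - |((p : ℕ) : ℝ) - q|)
  have h₂ := min_le_right |((p : ℕ) : ℝ) - q| (N - |((p : ℕ) : ℝ) - q|)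
  rw [cyclicDist]
  linarith

lemma abs_sin_pi_mul_sub_div (N : ℕ) (p q : Fin N) :
    |Real.sin (π * (((q : ℕ) : ℝ) - p) / N)| = Real.sin (π * cyclicDist N p q / N) := by
  have hN : (0 : ℝ) < N := by exact_mod_cast Fin.pos p
  have hp : ((p : ℕ) : ℝ) < N := by exact_mod_cast p.isLt
  have hq : ((q : ℕ) : ℝ) < N := by exact_mod_cast q.isLt
  rw [cyclicDist]
  set t := |((p : ℕ) : ℝ) - q|
  have htN : t ≤ N := by
    rw [abs_sub_le_iff]
    constructor <;> linarith [Nat.cast_nonneg (α := ℝ) (p : ℕ), Nat.cast_nonneg (α := ℝ) (q : ℕ)]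
  have habs : |Real.sin (π * (((q : ℕ) : ℝ) - p) / N)| = Real.sin (π * t / N) := by
    have hle : π * t / N ≤ π := by rw [div_le_iff₀ hN]; nlinarith [pi_pos]
    rw [← abs_of_nonneg (sin_nonneg_of_nonneg_of_le_pi (by positivity) hle),
      show t = |((q : ℕ) : ℝ) - p| from abs_sub_comm _ _]
    rcases abs_choice (((q : ℕ) : ℝ) - p) with h | h <;>
      simp only [h, mul_neg, neg_div, Real.sin_neg, abs_neg]
  have hreflect : Real.sin (π * (N - t) / N) = Real.sin (π * t / N) := by
    rw [show π * (N - t) / N = π - π * t / N by field_simp, Real.sin_pi_sub]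
  rcases min_choice t (N - t) with h | h <;> rw [h, habs]
  exact hreflect.symm

lemma norm_inner_idftCol_le {m : ℕ} (hm : 0 < m) {N : ℕ} {ω ω' : Fin N}
    (hfar : (N : ℝ) / (2 * m) ≤ cyclicDist N ω ω') :
    ‖inner ℂ (idftCol N m ω) (idftCol N m ω')‖ ≤ 1 / (m * Real.sin (π / (2 * m))) := by
  have hN : (0 : ℝ) < N := by exact_mod_cast Fin.pos ω
  have hm' : (1 : ℝ) ≤ m := by exact_mod_cast hm
  set θ : ℝ := 2 * π * (((ω' : ℕ) : ℝ) - ω) / N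
  have hphase : exp (2 * π * I / N) ^ ((ω' : ℤ) - ω) = exp (I * θ) := by
    rw [← exp_int_mul]
    congr 1
    push_cast [θ]
    ring
  have hpos : 0 < Real.sin (π / (2 * m)) :=
    sin_pos_of_pos_of_lt_pi (by positivity) (by
      rw [div_lt_iff₀ (by positivity)]; nlinarith [pi_pos])
  have hsin : Real.sin (π / (2 * m)) ≤ |Real.sin (θ / 2)| := by
    rw [show θ / 2 = π * (((ω' : ℕ) : ℝ) - ω) / N by ring, abs_sin_pi_mul_sub_div]
    have hhalf := cyclicDist_le_half N ω ω'
    apply sin_le_sin_of_le_of_le_pi_div_two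
    · linarith [show 0 < π / (2 * m) by positivity, pi_pos]
    · rw [div_le_iff₀ hN]; nlinarith [pi_pos]
    · rw [div_le_div_iff₀ (by positivity) hN]
      rw [div_le_iff₀ (by positivity)] at hfar
      nlinarith [pi_pos]
  rw [inner_idftCol, hphase, norm_mul, norm_inv, Complex.norm_natCast]
  calc (m : ℝ)⁻¹ * ‖∑ l ∈ range m, exp (I * θ) ^ l‖
      ≤ (m : ℝ)⁻¹ * (1 / |Real.sin (θ / 2)|) := by
        gcongr
        exact norm_geom_sum_exp_I_mul_le m (abs_pos.1 (hpos.trans_le hsin))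
    _ ≤ (m : ℝ)⁻¹ * (1 / Real.sin (π / (2 * m))) := by gcongr
    _ = 1 / (m * Real.sin (π / (2 * m))) := by field_simp

section Coherence

variable {𝕜 E ι : Type*} [RCLike 𝕜] [NormedAddCommGroup E] [InnerProductSpace 𝕜 E]

lemma inner_sum_smul_of_pairwise_inner_eq_zero {a : ι → E} {s : Finset ι}
    (hs : (s : Set ι).Pairwise fun i j => inner 𝕜 (a i) (a j) = 0) (x : ι → 𝕜) {i : ι}
    (hi : i ∈ s) :
    inner 𝕜 (a i) (∑ j ∈ s, x j • a j) = x i * inner 𝕜 (a i) (a i) := by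
  rw [inner_sum, sum_eq_single_of_mem i hi fun j hj hji => by
    rw [inner_smul_right, hs hi hj hji.symm, mul_zero], inner_smul_right]

theorem exists_mem_lt_norm_inner_of_isMaxOn {a : ι → E} (ha : ∀ i, ‖a i‖ = 1) {s : Finset ι}
    (hs : (s : Set ι).Pairwise fun i j => inner 𝕜 (a i) (a j) = 0) (hne : s.Nonempty)
    (x : ι → 𝕜) {v : E} {μ : ℝ} (hv : ‖v‖ < (1 - #s * μ) / 2 * s.sup' hne (‖x ·‖)) {i₀ : ι}
    (hmax : IsMaxOn (fun i => ‖inner 𝕜 (a i) (∑ j ∈ s, x j • a j + v)‖) s i₀) :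
    ∃ i ∈ s, μ < ‖inner 𝕜 (a i₀) (a i)‖ := by
  by_contra! hcoh
  set X := s.sup' hne (‖x ·‖)
  have hnoise : ∀ i, ‖inner 𝕜 (a i) v‖ ≤ ‖v‖ := fun i => by
    simpa [ha i] using norm_inner_le_norm (𝕜 := 𝕜) (a i) v
  obtain ⟨i₁, hi₁, hX⟩ := exists_mem_eq_sup' hne (‖x ·‖)
  have hlower : X - ‖v‖ ≤ ‖inner 𝕜 (a i₁) (∑ j ∈ s, x j • a j + v)‖ := by
    rw [inner_add_right, inner_sum_smul_of_pairwise_inner_eq_zero hs x hi₁,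
      inner_self_eq_one_of_norm_eq_one (ha i₁), mul_one, show X = ‖x i₁‖ from hX]
    exact (norm_sub_le_norm_add (x i₁) _).trans' (sub_le_sub_left (hnoise i₁) _)
  have hupper : ‖inner 𝕜 (a i₀) (∑ j ∈ s, x j • a j + v)‖ ≤ #s * μ * X + ‖v‖ := by
    rw [inner_add_right, inner_sum]
    refine (norm_add_le _ _).trans (add_le_add ?_ (hnoise i₀))
    calc ‖∑ j ∈ s, inner 𝕜 (a i₀) (x j • a j)‖
        ≤ ∑ j ∈ s, X * μ := (norm_sum_le _ _).trans <| sum_le_sum fun j hj => by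
          rw [inner_smul_right, norm_mul]
          exact mul_le_mul (le_sup' (‖x ·‖) hj) (hcoh j hj) (norm_nonneg _)
            ((norm_nonneg _).trans (le_sup' (‖x ·‖) hj))
      _ = #s * μ * X := by rw [sum_const, nsmul_eq_mul]; ring
  linarith [hlower.trans (isMaxOn_iff.1 hmax i₁ hi₁)]

end Coherence

theorem cast_first_iteration_success_general (N m k : ℕ) (hm : 0 < m)
    (hdvd : m ∣ N)
    (ω₀ : ℕ)
    (g : Fin m → Fin N) (hg : ∀ c : Fin m, (g c : ℕ) = ω₀ + (c : ℕ) * (N / m))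
    (Ω : Finset (Fin N)) (hΩsub : Ω ⊆ Finset.image g Finset.univ)
    (hΩ : Ω.Nonempty) (hk : Ω.card = k)
    (x : Fin N → ℂ) (v y : EuclideanSpace ℂ (Fin m))
    (hy : y = (∑ ω ∈ Ω, x ω • idftCol N m ω) + v)
    (hv : ‖v‖ < ((1 - (k : ℝ) / (m * Real.sin (Real.pi / (2 * m)))) / 2) *
      (Ω.sup' hΩ fun ω => ‖x ω‖))
    (ωs : Fin N)
    (hmax : ∀ ω : Fin N, ‖(inner ℂ (idftCol N m ω) y : ℂ)‖ ≤ ‖(inner ℂ (idftCol N m ωs) y : ℂ)‖) :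
    ∃ ω ∈ Ω, cyclicDist N ωs ω < (N : ℝ) / (2 * m) := by
  have hΓ : (Ω : Set (Fin N)).Pairwise fun ω ω' =>
      inner ℂ (idftCol N m ω) (idftCol N m ω') = 0 := by
    intro ω hω ω' hω' hne
    obtain ⟨c, -, rfl⟩ := mem_image.1 (hΩsub hω)
    obtain ⟨c', -, rfl⟩ := mem_image.1 (hΩsub hω')
    refine inner_idftCol_eq_zero hdvd hne ⟨(c' : ℤ) - c, ?_⟩
    rw [hg, hg]
    push_cast
    ring
  obtain ⟨ω, hω, hcoh⟩ := exists_mem_lt_norm_inner_of_isMaxOn (norm_idftCol hm N) hΓ hΩ x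
    (μ := 1 / (m * Real.sin (π / (2 * m)))) (by rwa [hk, ← div_eq_mul_one_div])
    (i₀ := ωs) (hy ▸ isMaxOn_iff.2 fun ω _ => hmax ω)
  exact ⟨ω, hω, lt_of_not_ge fun hfar => (norm_inner_idftCol_le hm hfar).not_gt hcoh⟩

/-- deterministic success of the first CAST decoding iteration:
with `m ∣ N`, `2m ≤ N`, support `Ω ⊆ Γ = {ω₀ + cN/m : c = 0,…,m−1}` of size `k`,
`ỹ = Σ_{ω∈Ω} x_ω a_ω + ṽ`, `ρ̄ = k/(m·sin(π/(2m))) < 1`, and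
`‖ṽ‖₂ < ((1−ρ̄)/2)·max_{ω∈Ω}|x_ω|`, every maximizer `ω*` of `ω ↦ |⟨a_ω, ỹ⟩|` satisfies
`dist_N(ω*, ω) < N/(2m)` for some `ω ∈ Ω`. -/
theorem cast_first_iteration_success (N m k : ℕ) (hN : 0 < N) (hm : 0 < m)
    (hdvd : m ∣ N) (h2m : 2 * m ≤ N)
    (ω₀ : ℕ) (hω₀ : ω₀ < N / m)
    (g : Fin m → Fin N) (hg : ∀ c : Fin m, (g c : ℕ) = ω₀ + (c : ℕ) * (N / m))
    (Ω : Finset (Fin N)) (hΩsub : Ω ⊆ Finset.image g Finset.univ)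
    (hΩ : Ω.Nonempty) (hk : Ω.card = k)
    (x : Fin N → ℂ) (v y : EuclideanSpace ℂ (Fin m))
    (hy : y = (∑ ω ∈ Ω, x ω • idftCol N m ω) + v)
    (hρ : (k : ℝ) / (m * Real.sin (Real.pi / (2 * m))) < 1)
    (hv : ‖v‖ < ((1 - (k : ℝ) / (m * Real.sin (Real.pi / (2 * m)))) / 2) *
      (Ω.sup' hΩ fun ω => ‖x ω‖))
    (ωs : Fin N)
    (hmax : ∀ ω : Fin N, ‖(inner ℂ (idftCol N m ω) y : ℂ)‖ ≤ ‖(inner ℂ (idftCol N m ωs) y : ℂ)‖) :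
    ∃ ω ∈ Ω, cyclicDist N ωs ω < (N : ℝ) / (2 * m) :=
  cast_first_iteration_success_general N m k hm hdvd ω₀ g hg Ω hΩsub hΩ hk x v y hy hv ωs hmax
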